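/- arXiv:1801.01252 — 2 statements merged into one kernel-verified Lean document; each statement's English description precedes it below -/
import Mathlib

section
/- Suppose u⁻, u ∈ X, B⁻, B ∈ W, p ∈ M and f ∈ X satisfy, for all v ∈ X, C ∈ W and q ∈ M: ⟨(u − u⁻)/τ, v⟩ + (1/R_e)⟨Gū, Gv⟩ + c(u⁻, ū, v) − b(v, p) − S_c d₁(B̄, B⁻, v) = ⟨f, v⟩; ⟨(B − B⁻)/τ, C⟩ + (S_c/R_m)⟨RB̄, RC⟩ − S_c d₂(ū, B⁻, C) = 0; and b(ū, q) = 0, where ū = (u + u⁻)/2 and B̄ = (B + B⁻)/2. Then the discrete energy identity holds: ‖u‖² + ‖B‖² + 2τ(1/R_e)‖Gū‖² + 2τ(S_c/R_m)‖RB̄‖² = ‖u⁻‖² + ‖B⁻‖² + 2τ⟨f, ū⟩. -/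
open scoped RealInnerProductSpace

/-- **Discrete energy identity for one step of the linearized mixed FEM.**
With `ū = (u + u⁻)/2`, `B̄ = (B + B⁻)/2`, if the scheme equations hold for all test
functions, then
`‖u‖² + ‖B‖² + 2τ(1/R_e)‖Gū‖² + 2τ(S_c/R_m)‖RB̄‖² = ‖u⁻‖² + ‖B⁻‖² + 2τ⟨f, ū⟩`. -/
theorem discrete_energy_identity
    {X W M Y Z : Type*}
    [NormedAddCommGroup X] [InnerProductSpace ℝ X]
    [NormedAddCommGroup W] [InnerProductSpace ℝ W]
    [NormedAddCommGroup M] [InnerProductSpace ℝ M]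
    [NormedAddCommGroup Y] [InnerProductSpace ℝ Y]
    [NormedAddCommGroup Z] [InnerProductSpace ℝ Z]
    (G : X →ₗ[ℝ] Y) (R : W →ₗ[ℝ] Z)
    (b : X →ₗ[ℝ] M →ₗ[ℝ] ℝ)
    (c : X →ₗ[ℝ] X →ₗ[ℝ] X →ₗ[ℝ] ℝ)
    (d₁ : W →ₗ[ℝ] W →ₗ[ℝ] X →ₗ[ℝ] ℝ)
    (d₂ : X →ₗ[ℝ] W →ₗ[ℝ] W →ₗ[ℝ] ℝ)
    (hc : ∀ w v : X, c w v v = 0)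
    (hd : ∀ (C E : W) (v : X), d₁ C E v + d₂ v E C = 0)
    (R_e R_m S_c τ : ℝ) (hRe : 0 < R_e) (hRm : 0 < R_m) (hSc : 0 < S_c) (hτ : 0 < τ)
    (um u : X) (Bm B : W) (p : M) (f : X)
    (hmom : ∀ v : X, ⟪(τ⁻¹ : ℝ) • (u - um), v⟫ + (1 / R_e) * ⟪G ((2:ℝ)⁻¹ • (u + um)), G v⟫
      + c um ((2:ℝ)⁻¹ • (u + um)) v - b v p
      - S_c * d₁ ((2:ℝ)⁻¹ • (B + Bm)) Bm v = ⟪f, v⟫)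
    (hmag : ∀ C : W, ⟪(τ⁻¹ : ℝ) • (B - Bm), C⟫
      + (S_c / R_m) * ⟪R ((2:ℝ)⁻¹ • (B + Bm)), R C⟫
      - S_c * d₂ ((2:ℝ)⁻¹ • (u + um)) Bm C = 0)
    (hdiv : ∀ q : M, b ((2:ℝ)⁻¹ • (u + um)) q = 0) :
    ‖u‖ ^ 2 + ‖B‖ ^ 2 + 2 * τ * (1 / R_e) * ‖G ((2:ℝ)⁻¹ • (u + um))‖ ^ 2
      + 2 * τ * (S_c / R_m) * ‖R ((2:ℝ)⁻¹ • (B + Bm))‖ ^ 2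
      = ‖um‖ ^ 2 + ‖Bm‖ ^ 2 + 2 * τ * ⟪f, (2:ℝ)⁻¹ • (u + um)⟫ := by

  set uh : X := (2:ℝ)⁻¹ • (u + um) with huh
  set Bh : W := (2:ℝ)⁻¹ • (B + Bm) with hBh
  have h1 := hmom uh
  have h2 := hmag Bh
  have h3 := hdiv p
  have h4 := hd Bh Bm uh
  have hc' := hc um uh
  have hG : ⟪G uh, G uh⟫ = ‖G uh‖ ^ 2 := real_inner_self_eq_norm_sq _
  have hR : ⟪R Bh, R Bh⟫ = ‖R Bh‖ ^ 2 := real_inner_self_eq_norm_sq _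
  have keyu : 2 * τ * ⟪(τ⁻¹ : ℝ) • (u - um), uh⟫ = ‖u‖ ^ 2 - ‖um‖ ^ 2 := by
    rw [huh, real_inner_smul_left, real_inner_smul_right, inner_sub_left,
      inner_add_right, inner_add_right, real_inner_self_eq_norm_sq,
      real_inner_self_eq_norm_sq, real_inner_comm um u]
    field_simp
    ring
  have keyB : 2 * τ * ⟪(τ⁻¹ : ℝ) • (B - Bm), Bh⟫ = ‖B‖ ^ 2 - ‖Bm‖ ^ 2 := by
    rw [hBh, real_inner_smul_left, real_inner_smul_right, inner_sub_left,
      inner_add_right, inner_add_right, real_inner_self_eq_norm_sq,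
      real_inner_self_eq_norm_sq, real_inner_comm Bm B]
    field_simp
    ring
  linear_combination -keyu - keyB + 2 * τ * h1 + 2 * τ * h2 - 2 * τ * (1 / R_e) * hG
    - 2 * τ * (S_c / R_m) * hR + 2 * τ * S_c * h4 - 2 * τ * hc' + 2 * τ * h3
end

section
/- (Invertibility of the scheme's linear system) Let P ∈ M_n(ℝ) and Q ∈ M_k(ℝ) be real matrices whose quadratic forms are positive definite (uᵀPu > 0 for all u ≠ 0, and bᵀQb > 0 for all b ≠ 0; P and Q need not be symmetric), let B ∈ M_{n×m}(ℝ) be injective as a linear map ℝᵐ → ℝⁿ (full column rank), and let N ∈ M_{n×k}(ℝ) be arbitrary. Then the block matrix A = [[ P , B , N ], [ Bᵀ , 0 , 0 ], [ −Nᵀ , 0 , Q ]] ∈ M_{n+m+k}(ℝ) is invertible. Equivalently, A x = 0 implies x = 0: if (u,p,b) satisfies Pu + Bp + Nb = 0, Bᵀu = 0, −Nᵀu + Qb = 0, then u = 0, p = 0, b = 0. -/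
open Matrix

/-- The abstract one-step matrix `A = [[P, B, N], [Bᵀ, 0, 0], [−Nᵀ, 0, Q]]` of the
linearized mixed finite element scheme. -/
def mhdAbstractMatrix {n m k : ℕ} (P : Matrix (Fin n) (Fin n) ℝ)
    (B : Matrix (Fin n) (Fin m) ℝ) (N : Matrix (Fin n) (Fin k) ℝ)
    (Q : Matrix (Fin k) (Fin k) ℝ) :
    Matrix (Fin n ⊕ (Fin m ⊕ Fin k)) (Fin n ⊕ (Fin m ⊕ Fin k)) ℝ :=
  Matrix.of fun i j =>
    match i, j with
    | .inl i, .inl j => P i j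
    | .inl i, .inr (.inl j) => B i j
    | .inl i, .inr (.inr j) => N i j
    | .inr (.inl i), .inl j => Bᵀ i j
    | .inr (.inl _), .inr _ => 0
    | .inr (.inr i), .inl j => -Nᵀ i j
    | .inr (.inr _), .inr (.inl _) => 0
    | .inr (.inr i), .inr (.inr j) => Q i j

theorem mhd_ker {n m k : ℕ}
    (P : Matrix (Fin n) (Fin n) ℝ) (B : Matrix (Fin n) (Fin m) ℝ)
    (N : Matrix (Fin n) (Fin k) ℝ) (Q : Matrix (Fin k) (Fin k) ℝ)
    (hP : ∀ u : Fin n → ℝ, u ≠ 0 → 0 < u ⬝ᵥ P.mulVec u)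
    (hQ : ∀ b : Fin k → ℝ, b ≠ 0 → 0 < b ⬝ᵥ Q.mulVec b)
    (hB : Function.Injective B.mulVec)
    (u : Fin n → ℝ) (p : Fin m → ℝ) (b : Fin k → ℝ)
    (h1 : P.mulVec u + B.mulVec p + N.mulVec b = 0)
    (h2 : Bᵀ.mulVec u = 0)
    (h3 : -(Nᵀ.mulVec u) + Q.mulVec b = 0) :
    u = 0 ∧ p = 0 ∧ b = 0 := by
  have hNu : Nᵀ.mulVec u = Q.mulVec b := by
    rw [neg_add_eq_zero] at h3; exact h3
  have key : u ⬝ᵥ P.mulVec u + b ⬝ᵥ Q.mulVec b = 0 := by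
    have e1 : u ⬝ᵥ (P.mulVec u + B.mulVec p + N.mulVec b) = 0 := by rw [h1, dotProduct_zero]
    have e2 : u ⬝ᵥ B.mulVec p = 0 := by
      rw [Matrix.dotProduct_mulVec, ← Matrix.mulVec_transpose, h2, zero_dotProduct]
    have e3 : u ⬝ᵥ N.mulVec b = b ⬝ᵥ Q.mulVec b := by
      rw [Matrix.dotProduct_mulVec, ← Matrix.mulVec_transpose, hNu, dotProduct_comm]
    rw [dotProduct_add, dotProduct_add, e2, e3] at e1
    linarith
  have hu : u = 0 := by
    by_contra hu
    have h1' := hP u hu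
    have h2' : 0 ≤ b ⬝ᵥ Q.mulVec b := by
      rcases eq_or_ne b 0 with rfl | hb
      · simp
      · exact (hQ b hb).le
    linarith
  have hb : b = 0 := by
    by_contra hb
    have h2' := hQ b hb
    have h1' : 0 ≤ u ⬝ᵥ P.mulVec u := by rw [hu]; simp
    linarith
  refine ⟨hu, ?_, hb⟩
  have : B.mulVec p = 0 := by
    have := h1
    rw [hu, hb] at this
    simpa using this
  have : B.mulVec p = B.mulVec 0 := by simpa using this
  simpa using hB this


/-- **Invertibility of the linear system of the scheme.** If the quadratic forms of `P`
and `Q` are positive definite, `B` has full column rank, and `N` is arbitrary, then the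
block matrix `A = [[P, B, N], [Bᵀ, 0, 0], [−Nᵀ, 0, Q]]` is invertible; equivalently,
`Pu + Bp + Nb = 0`, `Bᵀu = 0` and `−Nᵀu + Qb = 0` force `u = 0`, `p = 0`, `b = 0`. -/
theorem mhdAbstractMatrix_isUnit {n m k : ℕ}
    (P : Matrix (Fin n) (Fin n) ℝ) (B : Matrix (Fin n) (Fin m) ℝ)
    (N : Matrix (Fin n) (Fin k) ℝ) (Q : Matrix (Fin k) (Fin k) ℝ)
    (hP : ∀ u : Fin n → ℝ, u ≠ 0 → 0 < u ⬝ᵥ P.mulVec u)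
    (hQ : ∀ b : Fin k → ℝ, b ≠ 0 → 0 < b ⬝ᵥ Q.mulVec b)
    (hB : Function.Injective B.mulVec) :
    IsUnit (mhdAbstractMatrix P B N Q) ∧
    (∀ (u : Fin n → ℝ) (p : Fin m → ℝ) (b : Fin k → ℝ),
      P.mulVec u + B.mulVec p + N.mulVec b = 0 →
      Bᵀ.mulVec u = 0 →
      -(Nᵀ.mulVec u) + Q.mulVec b = 0 →
      u = 0 ∧ p = 0 ∧ b = 0) := by
  refine ⟨?_, fun u p b h1 h2 h3 => mhd_ker P B N Q hP hQ hB u p b h1 h2 h3⟩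
  rw [← Matrix.mulVec_injective_iff_isUnit]
  intro x y hxy
  have hx : (mhdAbstractMatrix P B N Q).mulVec (x - y) = 0 := by
    rw [Matrix.mulVec_sub, hxy, sub_self]
  set z := x - y with hz
  suffices hz0 : z = 0 by
    have := sub_eq_zero.mp hz0; exact this
  set A := mhdAbstractMatrix P B N Q
  have hcomp : ∀ i, A.mulVec z i = 0 := fun i => by rw [hx]; rfl
  set u : Fin n → ℝ := fun i => z (.inl i)
  set p : Fin m → ℝ := fun j => z (.inr (.inl j))
  set b : Fin k → ℝ := fun j => z (.inr (.inr j))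
  have h1 : P.mulVec u + B.mulVec p + N.mulVec b = 0 := by
    funext i
    have := hcomp (.inl i)
    simpa [A, mhdAbstractMatrix, Matrix.mulVec, dotProduct, Fintype.sum_sum_type, u, p, b,
      add_assoc] using this
  have h2 : Bᵀ.mulVec u = 0 := by
    funext i
    have := hcomp (.inr (.inl i))
    simpa [A, mhdAbstractMatrix, Matrix.mulVec, dotProduct, Fintype.sum_sum_type, u] using this
  have h3 : -(Nᵀ.mulVec u) + Q.mulVec b = 0 := by
    funext i
    have := hcomp (.inr (.inr i))
    simpa [A, mhdAbstractMatrix, Matrix.mulVec, dotProduct, Fintype.sum_sum_type, u, b,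
      Finset.sum_neg_distrib, neg_mul] using this
  obtain ⟨hu, hp, hb⟩ := mhd_ker P B N Q hP hQ hB u p b h1 h2 h3
  funext i
  rcases i with i | i | i
  · exact congrFun hu i
  · exact congrFun hp i
  · exact congrFun hb i
end
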